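/- arXiv:1912.11441 — 3 statements merged into one kernel-verified Lean document; each statement's English description precedes it below -/
import Mathlib

section
/- Let p be an odd prime, n ≥ 1, and A, B, C ∈ F_{p^n} with A ≠ 0. Let N be the number of affine points (x,y) ∈ F_{p^n}² satisfying y² = Ax³ + Bx + C. Then, working in F_{p^n}, N - p^n ≡ -∑_{l=⌈(p^n-1)/6⌉}^{⌊(p^n-1)/4⌋} C((p^n-1)/2, 2l) · C(2l, (p^n-1-2l)/2) · A^((p^n-1-2l)/2) · B^(3l-(p^n-1)/2) · C^((p^n-1)/2-2l) (mod p), where C(n,k) denotes the binomial coefficient. -/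
/-!
Over `F` of odd order `q = 2m + 1`, Euler's criterion says the equation `y² = c` has
`1 + c ^ m` solutions modulo `p`, so `N ≡ ∑ₓ f(x) ^ m` with `f = Ax³ + Bx + C`. The power sum
`∑ₓ x ^ e` vanishes for `e < 2(q - 1)` except at `e = q - 1`, where it is `-1`; since
`deg f ^ m = 3m < 2(q - 1)`, the sum is minus the coefficient of `x ^ 2m` in `f ^ m`.
In the multinomial expansion a term with `j` factors `Ax³` among `k` non-constant factors has
degree `k + 2j`, which equals `2m` exactly when `k = 2l` and `j = m - l`.
-/

open Finset

theorem sum_range_sum_range_ite_eq_sum_Icc {M : Type*} [AddCommMonoid M] {m a b : ℕ}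
    (hab : ∀ l, l ∈ Icc a b ↔ m ≤ 3 * l ∧ 2 * l ≤ m) (g : ℕ → ℕ → M) :
    ∑ k ∈ range (m + 1), ∑ j ∈ range (k + 1), (if k + 2 * j = 2 * m then g k j else 0)
      = ∑ l ∈ Icc a b, g (2 * l) (m - l) := by
  have hinv : ∀ k j, (k < m + 1 ∧ j < k + 1) ∧ k + 2 * j = 2 * m →
      2 * (m - j) = k ∧ m - (m - j) = j := by
    omega
  rw [sum_sigma', ← sum_filter]
  refine sum_nbij' (fun kj => m - kj.2) (fun l => ⟨2 * l, m - l⟩) ?_ ?_ ?_ ?_ ?_ <;>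
    simp only [mem_filter, mem_sigma, mem_range, hab, Sigma.forall, Sigma.mk.injEq]
  · omega
  · omega
  · intro k j hkj
    rw [(hinv k j hkj).1, (hinv k j hkj).2]
    exact ⟨rfl, HEq.rfl⟩
  · omega
  · intro k j hkj
    rw [(hinv k j hkj).1, (hinv k j hkj).2]

theorem trinomial_pow {R : Type*} [CommSemiring R] (a b c x : R) (m : ℕ) :
    (a * x ^ 3 + b * x + c) ^ m
      = ∑ k ∈ range (m + 1), ∑ j ∈ range (k + 1),
          (m.choose k * k.choose j * a ^ j * b ^ (k - j) * c ^ (m - k) : R) * x ^ (k + 2 * j) := by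
  rw [add_pow]
  refine sum_congr rfl fun k _ => ?_
  rw [add_pow, sum_mul, sum_mul]
  refine sum_congr rfl fun j hj => ?_
  have hx : (x ^ 3) ^ j * x ^ (k - j) = x ^ (k + 2 * j) := by
    rw [← pow_mul, ← pow_add]
    congr 1
    have := mem_range.mp hj
    omega
  rw [← hx]
  ring

namespace FiniteField

variable {K : Type*} [Field K] [Fintype K]

theorem sum_pow_card_sub_one : ∑ x : K, x ^ (Fintype.card K - 1) = -1 := by
  classical
  have hq : 1 < Fintype.card K := Fintype.one_lt_card
  rw [← sum_erase_add _ _ (mem_univ 0), zero_pow (by omega), add_zero,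
    sum_congr rfl fun x hx => pow_card_sub_one_eq_one x (ne_of_mem_erase hx), sum_const,
    card_erase_of_mem (mem_univ _), card_univ, nsmul_one, Nat.cast_sub hq.le,
    cast_card_eq_zero, Nat.cast_one, zero_sub]

theorem sum_pow_of_lt_two_mul_card_sub_one {e : ℕ} (he : e < 2 * (Fintype.card K - 1)) :
    ∑ x : K, x ^ e = if e = Fintype.card K - 1 then -1 else 0 := by
  rcases lt_trichotomy e (Fintype.card K - 1) with hlt | rfl | hgt
  · rw [if_neg hlt.ne, sum_pow_lt_card_sub_one K e hlt]
  · rw [if_pos rfl, sum_pow_card_sub_one]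
  · have hred : ∀ x : K, x ^ e = x ^ (e - (Fintype.card K - 1)) := fun x => by
      rcases eq_or_ne x 0 with rfl | hx
      · rw [zero_pow (by omega), zero_pow (by omega)]
      · rw [← pow_sub_mul_pow x hgt.le, pow_card_sub_one_eq_one x hx, mul_one]
    rw [if_neg hgt.ne', sum_congr rfl fun x _ => hred x]
    exact sum_pow_lt_card_sub_one K _ (by omega)

theorem cast_card_sqrts [DecidableEq K] (hK : ringChar K ≠ 2) (c : K) :
    ((univ.filter fun y : K => y ^ 2 = c).card : K) = 1 + c ^ (Fintype.card K / 2) := by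
  have h := congrArg (Int.cast : ℤ → K) (quadraticChar_card_sqrts hK c)
  rw [Set.toFinset_ofPred] at h
  push_cast at h
  rw [h, quadraticChar_eq_pow_of_char_ne_two' hK, add_comm]

theorem cast_card_filter_sq_eq [DecidableEq K] (hK : ringChar K ≠ 2) (f : K → K) :
    ((univ.filter fun xy : K × K => xy.2 ^ 2 = f xy.1).card : K)
      = ∑ x : K, f x ^ (Fintype.card K / 2) := by
  rw [card_filter, Fintype.sum_prod_type]
  simp_rw [← card_filter]
  push_cast
  simp_rw [cast_card_sqrts hK]
  rw [sum_add_distrib, sum_const, card_univ, nsmul_one, cast_card_eq_zero, zero_add]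

theorem sum_cubic_pow_eq {m : ℕ} (hq : Fintype.card K = 2 * m + 1) (a b c : K) :
    ∑ x : K, (a * x ^ 3 + b * x + c) ^ m
      = -∑ k ∈ range (m + 1), ∑ j ∈ range (k + 1),
          if k + 2 * j = 2 * m then
            (m.choose k * k.choose j * a ^ j * b ^ (k - j) * c ^ (m - k) : K) else 0 := by
  have hm : 1 ≤ m := by linarith [(Fintype.one_lt_card : 1 < Fintype.card K)]
  simp only [trinomial_pow, ← sum_neg_distrib]
  rw [sum_comm]
  refine sum_congr rfl fun k hk => ?_
  rw [sum_comm]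
  refine sum_congr rfl fun j hj => ?_
  have hdeg : k + 2 * j < 2 * (Fintype.card K - 1) := by
    rw [mem_range] at hk hj
    omega
  rw [← mul_sum, sum_pow_of_lt_two_mul_card_sub_one hdeg, hq, Nat.add_sub_cancel]
  split_ifs <;> simp

end FiniteField

theorem stmt_5_general (p n : ℕ) (hodd : Odd p)
    (F : Type*) [Field F] [Fintype F] [DecidableEq F]
    (hcard : Fintype.card F = p ^ n)
    (A B C : F) :
    (((Finset.univ.filter
        (fun xy : F × F => xy.2 ^ 2 = A * xy.1 ^ 3 + B * xy.1 + C)).card : F)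
      - ((p ^ n : ℕ) : F)) =
      - ∑ l ∈ Finset.Icc ((p ^ n - 1 + 5) / 6) ((p ^ n - 1) / 4),
          ((Nat.choose ((p ^ n - 1) / 2) (2 * l) : F) *
            (Nat.choose (2 * l) ((p ^ n - 1 - 2 * l) / 2) : F) *
            A ^ ((p ^ n - 1 - 2 * l) / 2) *
            B ^ (3 * l - (p ^ n - 1) / 2) *
            C ^ ((p ^ n - 1) / 2 - 2 * l)) := by
  obtain ⟨m, hm⟩ := hodd.pow (n := n)
  have hq : Fintype.card F = 2 * m + 1 := hcard.trans hm
  have hF : ringChar F ≠ 2 := fun h => by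
    have := FiniteField.even_card_iff_char_two.mp h
    omega
  have hhalf : (2 * m + 1) / 2 = m := by omega
  rw [← hcard, FiniteField.cast_card_eq_zero, sub_zero,
    FiniteField.cast_card_filter_sq_eq hF fun x => A * x ^ 3 + B * x + C, hq, hhalf,
    FiniteField.sum_cubic_pow_eq hq, Nat.add_sub_cancel,
    sum_range_sum_range_ite_eq_sum_Icc (m := m) (a := (2 * m + 5) / 6) (b := 2 * m / 4)
      fun l => by rw [mem_Icc]; omega]
  refine congrArg Neg.neg (sum_congr rfl fun l hl => ?_)
  rw [mem_Icc] at hl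
  have hexpA : (2 * m - 2 * l) / 2 = m - l := by omega
  have hexpB : 2 * l - (m - l) = 3 * l - 2 * m / 2 := by omega
  rw [hexpA, hexpB, Nat.mul_div_cancel_left m two_pos]

theorem stmt_5 (p n : ℕ) (hp : p.Prime) (hodd : Odd p) (hn : 0 < n)
    (F : Type*) [Field F] [Fintype F] [DecidableEq F]
    (hcard : Fintype.card F = p ^ n)
    (A B C : F) (hA : A ≠ 0) :
    (((Finset.univ.filter
        (fun xy : F × F => xy.2 ^ 2 = A * xy.1 ^ 3 + B * xy.1 + C)).card : F)
      - ((p ^ n : ℕ) : F)) =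
      - ∑ l ∈ Finset.Icc ((p ^ n - 1 + 5) / 6) ((p ^ n - 1) / 4),
          ((Nat.choose ((p ^ n - 1) / 2) (2 * l) : F) *
            (Nat.choose (2 * l) ((p ^ n - 1 - 2 * l) / 2) : F) *
            A ^ ((p ^ n - 1 - 2 * l) / 2) *
            B ^ (3 * l - (p ^ n - 1) / 2) *
            C ^ ((p ^ n - 1) / 2 - 2 * l)) :=
  stmt_5_general p n hodd F hcard A B C
end

section
/- Let q be an odd prime power, χ the quadratic character of F_q, and a,b,c,d ∈ F_q with a ≠ 0. Suppose the cubic ax³+bx²+cx+d factors as a(x-α)²(x-β) with α, β ∈ F_q and α ≠ β. Then ∑_{x∈F_q} χ(ax³+bx²+cx+d) = -χ(aα - aβ). -/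
/-!
Away from the double root `α`, the square `(x - α)²` is invisible to `χ`, so the sum is
`χ(a) ∑_{x ≠ α} χ(x - β)`. The full sum `∑_x χ(x - β)` vanishes, hence only the missing
term `-χ(a) χ(α - β)` survives.
-/

open Finset

namespace FiniteField

lemma ringChar_ne_two_of_odd_card {F : Type*} [Field F] [Fintype F]
    (hodd : Odd (Fintype.card F)) : ringChar F ≠ 2 :=
  fun h => Nat.not_even_iff_odd.mpr hodd (even_iff_two_dvd.mpr
    (Nat.dvd_of_mod_eq_zero (even_card_iff_char_two.mp h)))

variable {F : Type*} [Field F] [Fintype F] [DecidableEq F]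

lemma quadraticChar_sum_sub_eq_zero (hF : ringChar F ≠ 2) (β : F) :
    ∑ x : F, quadraticChar F (x - β) = 0 := by
  rw [Fintype.sum_equiv (Equiv.subRight β) (fun x => quadraticChar F (x - β)) (quadraticChar F)
    fun _ => rfl]
  exact quadraticChar_sum_zero hF

lemma quadraticChar_mul_sq_mul {x : F} (hx : x ≠ 0) (a y : F) :
    quadraticChar F (a * x ^ 2 * y) = quadraticChar F (a * y) := by
  rw [map_mul, map_mul, quadraticChar_sq_one' hx, mul_one, map_mul]

theorem quadraticChar_sum_mul_sq_mul (hF : ringChar F ≠ 2) (a α β : F) :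
    ∑ x : F, quadraticChar F (a * (x - α) ^ 2 * (x - β)) = -quadraticChar F (a * (α - β)) := by
  have off_α : ∀ x ∈ univ.erase α,
      quadraticChar F (a * (x - α) ^ 2 * (x - β)) = quadraticChar F a * quadraticChar F (x - β) :=
    fun x hx => by
      rw [quadraticChar_mul_sq_mul (sub_ne_zero.mpr (ne_of_mem_erase hx)), map_mul]
  have sum_eq_zero : quadraticChar F a * quadraticChar F (α - β)
      + ∑ x ∈ univ.erase α, quadraticChar F a * quadraticChar F (x - β) = 0 := by
    rw [add_sum_erase _ (fun x => quadraticChar F a * quadraticChar F (x - β)) (mem_univ α),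
      ← mul_sum, quadraticChar_sum_sub_eq_zero hF, mul_zero]
  rw [← add_sum_erase _ _ (mem_univ α), sum_congr rfl off_α, sub_self, zero_pow two_ne_zero,
    mul_zero, zero_mul, MulChar.map_zero, zero_add, map_mul (quadraticChar F) a (α - β)]
  linear_combination sum_eq_zero

end FiniteField

theorem stmt_7_general (F : Type*) [Field F] [Fintype F] [DecidableEq F]
    (hodd : Odd (Fintype.card F)) (a b c d α β : F)
    (hfac : ∀ x : F, a * x ^ 3 + b * x ^ 2 + c * x + d = a * (x - α) ^ 2 * (x - β)) :
    ∑ x : F, quadraticChar F (a * x ^ 3 + b * x ^ 2 + c * x + d)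
      = -(quadraticChar F (a * α - a * β)) := by
  simp_rw [hfac, ← mul_sub]
  exact FiniteField.quadraticChar_sum_mul_sq_mul
    (FiniteField.ringChar_ne_two_of_odd_card hodd) a α β

theorem stmt_7 (F : Type*) [Field F] [Fintype F] [DecidableEq F]
    (hodd : Odd (Fintype.card F)) (a b c d α β : F) (ha : a ≠ 0) (hαβ : α ≠ β)
    (hfac : ∀ x : F, a * x ^ 3 + b * x ^ 2 + c * x + d = a * (x - α) ^ 2 * (x - β)) :
    ∑ x : F, quadraticChar F (a * x ^ 3 + b * x ^ 2 + c * x + d)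
      = -(quadraticChar F (a * α - a * β)) :=
  stmt_7_general F hodd a b c d α β hfac
end

section
/- Let p be a prime with p ≡ 1 (mod 3) and n ≥ 1. Then the binomial coefficient C((p^n-1)/2, (p^n-1)/3) is not divisible by p. -/
/-!
If `d ∣ p - 1`, every base-`p` digit of `(p ^ n - 1) / d` equals `(p - 1) / d`. Lucas's theorem
then gives `C((p ^ n - 1) / 2, (p ^ n - 1) / 3) ≡ C((p - 1) / 2, (p - 1) / 3) ^ n (mod p)`, and the
right-hand side is prime to `p` because `(p - 1) / 2 < p`.
-/

theorem Nat.pow_succ_sub_one_div {p d : ℕ} (n : ℕ) (hd : d ∣ p - 1) :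
    (p ^ (n + 1) - 1) / d = (p - 1) / d + p * ((p ^ n - 1) / d) := by
  have hsplit : p ^ (n + 1) - 1 = (p - 1) + p * (p ^ n - 1) := by
    rcases p.eq_zero_or_pos with rfl | hp
    · simp
    · have := Nat.le_mul_of_pos_right p (Nat.one_le_pow n p hp)
      rw [Nat.mul_sub, pow_succ', mul_one]
      omega
  rw [hsplit, Nat.add_div_of_dvd_right hd,
    Nat.mul_div_assoc _ (hd.trans (Nat.sub_one_dvd_pow_sub_one p n))]

open Nat in
theorem Choose.choose_pow_sub_one_div_modEq_pow {p d e : ℕ} [Fact p.Prime] (n : ℕ)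
    (hd : d ∣ p - 1) (he : e ∣ p - 1) :
    choose ((p ^ n - 1) / d) ((p ^ n - 1) / e) ≡ choose ((p - 1) / d) ((p - 1) / e) ^ n
      [MOD p] := by
  have hp : 0 < p := (Fact.out : p.Prime).pos
  have digit_mod {f : ℕ} (x : ℕ) : ((p - 1) / f + p * x) % p = (p - 1) / f := by
    rw [Nat.add_mul_mod_self_left, Nat.mod_eq_of_lt ((Nat.div_le_self _ _).trans_lt (by omega))]
  have digit_div {f : ℕ} (x : ℕ) : ((p - 1) / f + p * x) / p = x := by
    rw [Nat.add_mul_div_left _ _ hp, Nat.div_eq_of_lt ((Nat.div_le_self _ _).trans_lt (by omega)),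
      zero_add]
  induction n with
  | zero => simp [Nat.ModEq.refl]
  | succ n ih =>
    rw [Nat.pow_succ_sub_one_div n hd, Nat.pow_succ_sub_one_div n he, pow_succ']
    refine choose_modEq_choose_mod_mul_choose_div_nat.trans ?_
    rw [digit_mod, digit_mod, digit_div, digit_div]
    exact ih.mul_left _

theorem stmt_15_general (p n : ℕ) (hp : p.Prime) (h3 : p % 3 = 1) :
    ¬ p ∣ Nat.choose ((p ^ n - 1) / 2) ((p ^ n - 1) / 3) := by
  have := Fact.mk hp
  have two_dvd : 2 ∣ p - 1 := by
    have := hp.eq_two_or_odd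
    omega
  have three_dvd : 3 ∣ p - 1 := by omega
  rw [(Choose.choose_pow_sub_one_div_modEq_pow n two_dvd three_dvd).dvd_iff dvd_rfl]
  exact hp.coprime_iff_not_dvd.mp ((hp.coprime_choose_of_lt (by omega) (by omega)).pow_right n)

theorem stmt_15 (p n : ℕ) (hp : p.Prime) (h3 : p % 3 = 1) (hn : 1 ≤ n) :
    ¬ p ∣ Nat.choose ((p ^ n - 1) / 2) ((p ^ n - 1) / 3) :=
  stmt_15_general p n hp h3
end
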